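/- If f: R → S is an elementary extension of rings, then the definable trace DefTr^S_R equals all of Mod-R; that is, every right R-module M is a pure submodule of the restriction M′_R of some right S-module M′. (Concretely, for a suitable ultrafilter, the ultrapower M^I/U of M carries an S-module structure extending its R-module structure, and the diagonal embedding M → M^I/U is a pure embedding of R-modules.) -/

import Mathlib

/-!
Core framework for formalizing statements from
"Tensor and direct extension of definable subcategories" (M. Prest).

Conventions:
* A *right* `R`-module is a type with `[AddCommGroup M] [Module Rᵐᵒᵖ M]`;
  the right action of `r : R` on `a : M` is `MulOpposite.op r • a`.
* A *left* `R`-module is a type with `[AddCommGroup L] [Module R L]`.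
* An `(R,S)`-bimodule is a type with a left `R`-action and a right `S`-action
  which commute: `[Module R B] [Module Sᵐᵒᵖ B] [SMulCommClass R Sᵐᵒᵖ B]`.
-/

open MulOpposite

universe u v

namespace MTM

/-- A pp formula for (right) `R`-modules, with free variables indexed by `ι`,
bound variables indexed by `κ` and equations indexed by `ε`:
`∃ ȳ (x̄ A + ȳ B = 0)`. -/
structure PP (R : Type u) [Ring R] (ι : Type) : Type (max u 1) where
  κ : Type
  ε : Type
  [fintκ : Fintype κ]
  [fintε : Fintype ε]
  A : Matrix ι ε R
  B : Matrix κ ε R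

attribute [instance] PP.fintκ PP.fintε

namespace PP

variable {R : Type u} [Ring R] {S : Type u} [Ring S] {ι : Type} [Fintype ι]

/-- The solution set of a pp formula in a right `R`-module. -/
def sol (φ : PP R ι) (M : Type v) [AddCommGroup M] [Module Rᵐᵒᵖ M] : Set (ι → M) :=
  { a | ∃ b : φ.κ → M, ∀ j : φ.ε,
      (∑ i, op (φ.A i j) • a i) + (∑ k, op (φ.B k j) • b k) = 0 }

/-- The solution set of a pp formula in a left `R`-module (the formula is then read
with coefficients acting on the left). -/
def solL (φ : PP R ι) (L : Type v) [AddCommGroup L] [Module R L] : Set (ι → L) :=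
  { a | ∃ b : φ.κ → L, ∀ j : φ.ε,
      (∑ i, φ.A i j • a i) + (∑ k, φ.B k j • b k) = 0 }

/-- `φ ≤ ψ` : every solution of `φ` is a solution of `ψ`, in every right `R`-module. -/
def Le (φ ψ : PP R ι) : Prop :=
  ∀ (M : Type u) [AddCommGroup M] [Module Rᵐᵒᵖ M], φ.sol M ⊆ ψ.sol M

/-- The elementary dual `Dφ = ∃ z̄ (x̄ = A z̄ ∧ B z̄ = 0)` of a pp formula for right modules;
it is a pp formula for left `R`-modules (to be interpreted via `solL`). -/
noncomputable def dual (φ : PP R ι) : PP R ι where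
  κ := φ.ε
  ε := ι ⊕ φ.κ
  A := fun i e =>
    letI := Classical.decEq ι
    Sum.elim (fun i' => if i = i' then (1 : R) else 0) (fun _ => (0 : R)) e
  B := fun z e => Sum.elim (fun i' => -(φ.A i' z)) (fun k => φ.B k z) e

/-- Transport of a pp formula along a ring homomorphism (`f⁎φ`). -/
def map (f : R →+* S) (φ : PP R ι) : PP S ι :=
  { κ := φ.κ, ε := φ.ε, A := fun i j => f (φ.A i j), B := fun k j => f (φ.B k j) }

end PP

variable (R : Type u) [Ring R] (S : Type u) [Ring S]

/-- A pp-pair `φ/ψ` for right `R`-modules: pp formulas (in `n` free variables)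
with `ψ(M) ≤ φ(M)` for every right `R`-module `M`. -/
structure PPPair : Type (u + 1) where
  n : ℕ
  num : PP R (Fin n)
  den : PP R (Fin n)
  le : ∀ (M : Type u) [AddCommGroup M] [Module Rᵐᵒᵖ M], den.sol M ⊆ num.sol M

/-- A pp-pair for left `R`-modules. -/
structure PPPairL : Type (u + 1) where
  n : ℕ
  num : PP R (Fin n)
  den : PP R (Fin n)
  le : ∀ (L : Type u) [AddCommGroup L] [Module R L], den.solL L ⊆ num.solL L

variable {R}

/-- A pp-pair is closed on a right module `M` if the two solution sets agree. -/
def PPPair.ClosedOn (p : PPPair R) (M : Type v) [AddCommGroup M] [Module Rᵐᵒᵖ M] : Prop :=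
  p.num.sol M = p.den.sol M

/-- A pp-pair is closed on a left module `L` if the two solution sets agree. -/
def PPPairL.ClosedOn (p : PPPairL R) (L : Type v) [AddCommGroup L] [Module R L] : Prop :=
  p.num.solL L = p.den.solL L

variable (R)

/-- The subcategory (class of modules, as a set of objects of `Mod-R`) defined by
closure of a set of pp-pairs. -/
def definedBy (Φ : Set (PPPair R)) : Set (ModuleCat.{u} Rᵐᵒᵖ) :=
  { M | ∀ p ∈ Φ, p.ClosedOn M }

/-- The subcategory of left modules defined by closure of a set of pp-pairs. -/
def definedByL (Φ : Set (PPPairL R)) : Set (ModuleCat.{u} R) :=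
  { L | ∀ p ∈ Φ, p.ClosedOn L }

/-- A class of right `R`-modules is a definable subcategory if it is the class of
modules on which each pp-pair in some set of pp-pairs is closed. -/
def IsDefinable (D : Set (ModuleCat.{u} Rᵐᵒᵖ)) : Prop :=
  ∃ Φ : Set (PPPair R), D = definedBy R Φ

/-- Definability for classes of left `R`-modules. -/
def IsDefinableL (D : Set (ModuleCat.{u} R)) : Prop :=
  ∃ Φ : Set (PPPairL R), D = definedByL R Φ

/-- `⟨X⟩`: the smallest definable subcategory of `Mod-R` containing `X`. -/
def gen (X : Set (ModuleCat.{u} Rᵐᵒᵖ)) : Set (ModuleCat.{u} Rᵐᵒᵖ) :=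
  ⋂₀ { D | IsDefinable R D ∧ X ⊆ D }

/-- `⟨X⟩` for classes of left modules. -/
def genL (X : Set (ModuleCat.{u} R)) : Set (ModuleCat.{u} R) :=
  ⋂₀ { D | IsDefinableL R D ∧ X ⊆ D }

/-- `φ ≤_𝒳 ψ` for a class `𝒳` of right `R`-modules. -/
def LeOn (𝒳 : Set (ModuleCat.{u} Rᵐᵒᵖ)) {ι : Type} [Fintype ι] (φ ψ : PP R ι) : Prop :=
  ∀ M ∈ 𝒳, φ.sol M ⊆ ψ.sol M

/-- A pure embedding of right `R`-modules: an injective linear map which reflects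
solution sets of pp formulas. -/
def IsPureEmb {M N : Type*} [AddCommGroup M] [Module Rᵐᵒᵖ M]
    [AddCommGroup N] [Module Rᵐᵒᵖ N] (f : M →ₗ[Rᵐᵒᵖ] N) : Prop :=
  Function.Injective f ∧
    ∀ (ι : Type) (_ : Fintype ι) (φ : PP R ι) (a : ι → M),
      (fun i => f (a i)) ∈ φ.sol N → a ∈ φ.sol M

/-- A pure-injective module: every pure embedding out of it splits. -/
def IsPureInj (N : Type u) [AddCommGroup N] [Module Rᵐᵒᵖ N] : Prop :=
  ∀ (M : Type u) [AddCommGroup M] [Module Rᵐᵒᵖ M] (g : N →ₗ[Rᵐᵒᵖ] M),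
    IsPureEmb R g → ∃ h : M →ₗ[Rᵐᵒᵖ] N, h.comp g = LinearMap.id

/-- `N` is an elementary cogenerator for the definable subcategory `D`:
a pure-injective member of `D` such that every member of `D` purely embeds in a
direct power of `N`. -/
def IsElemCogen (D : Set (ModuleCat.{u} Rᵐᵒᵖ)) (N : ModuleCat.{u} Rᵐᵒᵖ) : Prop :=
  N ∈ D ∧ IsPureInj R N ∧
    ∀ M ∈ D, ∃ (I : Type u) (g : M →ₗ[Rᵐᵒᵖ] (I → N)), IsPureEmb R g

/-- A pure-injective hull of `X`: a minimal pure embedding into a pure-injective. -/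
def IsPureInjHull {X H : Type u} [AddCommGroup X] [Module Rᵐᵒᵖ X]
    [AddCommGroup H] [Module Rᵐᵒᵖ H] (h : X →ₗ[Rᵐᵒᵖ] H) : Prop :=
  IsPureEmb R h ∧ IsPureInj R H ∧
    ∀ (Y : Type u) [AddCommGroup Y] [Module Rᵐᵒᵖ Y] (g : H →ₗ[Rᵐᵒᵖ] Y),
      IsPureEmb R (g.comp h) → IsPureEmb R g

section RingHom

variable (f : R →+* S)

/-- Restriction of scalars of a (bundled) right `S`-module along `f : R →+* S`. -/
noncomputable def resMod (M : ModuleCat.{u} Sᵐᵒᵖ) : ModuleCat.{u} Rᵐᵒᵖ :=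
  (ModuleCat.restrictScalars (RingHom.op f)).obj M

/-- The (definable) restriction `C|_R` of a definable subcategory `C` of `Mod-S`
along `f : R → S` : the subcategory of `Mod-R` defined by all pp-pairs `φ/ψ` for
`R`-modules such that `f⁎φ/f⁎ψ` is closed on `C`. -/
def restrictSubcat (C : Set (ModuleCat.{u} Sᵐᵒᵖ)) : Set (ModuleCat.{u} Rᵐᵒᵖ) :=
  definedBy R { p : PPPair R | ∀ M ∈ C, (p.num.map f).sol M = (p.den.map f).sol M }

/-- The definable trace of `Mod-S` in `Mod-R` along `f`. -/
def DefTr : Set (ModuleCat.{u} Rᵐᵒᵖ) := restrictSubcat R S f Set.univ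

/-- The direct extension `D^S` of a definable subcategory `D` of `Mod-R`:
those `S`-modules whose restriction along `f` lies in `D`. -/
def directExt (D : Set (ModuleCat.{u} Rᵐᵒᵖ)) : Set (ModuleCat.{u} Sᵐᵒᵖ) :=
  { M | resMod R S f M ∈ D }

end RingHom

end MTM
-- Tensor product over a (possibly noncommutative) ring.
namespace MTM

open MulOpposite TensorProduct

universe x
variable (R : Type u) [Ring R] (S : Type u) [Ring S]

section Tensor

variable (M : Type u) [AddCommGroup M] [Module Rᵐᵒᵖ M]
variable (B : Type u) [AddCommGroup B] [Module R B]

/-- The subgroup of `M ⊗_ℤ B` of balancing relations. -/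
def tensorRel : Submodule ℤ (TensorProduct ℤ M B) :=
  Submodule.span ℤ
    { x | ∃ (r : R) (m : M) (b : B), x = (op r • m) ⊗ₜ[ℤ] b - m ⊗ₜ[ℤ] (r • b) }

/-- The tensor product `M ⊗_R B` of a right `R`-module and a left `R`-module,
as the quotient of `M ⊗_ℤ B` by the balancing relations. -/
abbrev RTensor : Type u := TensorProduct ℤ M B ⧸ tensorRel R M B

/-- `m ⊗ b` in `M ⊗_R B`. -/
noncomputable def rtmul (m : M) (b : B) : RTensor R M B := Submodule.Quotient.mk (m ⊗ₜ[ℤ] b)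

variable {M B}
variable {M' : Type u} [AddCommGroup M'] [Module Rᵐᵒᵖ M']
variable {B' : Type u} [AddCommGroup B'] [Module R B']

theorem rel_le_B (g : B →ₗ[R] B') :
    tensorRel R M B ≤
      (tensorRel R M B').comap (LinearMap.lTensor M g.toAddMonoidHom.toIntLinearMap) := by
  refine Submodule.span_le.mpr ?_
  rintro x ⟨r, m, b, rfl⟩
  show LinearMap.lTensor M g.toAddMonoidHom.toIntLinearMap _ ∈ tensorRel R M B'
  have hx : LinearMap.lTensor M g.toAddMonoidHom.toIntLinearMap
      ((op r • m) ⊗ₜ[ℤ] b - m ⊗ₜ[ℤ] (r • b)) = (op r • m) ⊗ₜ[ℤ] g b - m ⊗ₜ[ℤ] (r • g b) := by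
    rw [map_sub, LinearMap.lTensor_tmul, LinearMap.lTensor_tmul]
    simp only [AddMonoidHom.coe_toIntLinearMap, LinearMap.toAddMonoidHom_coe, g.map_smul]
  rw [hx]
  exact Submodule.subset_span ⟨r, m, g b, rfl⟩

theorem rel_le_M (h : M →ₗ[Rᵐᵒᵖ] M') :
    tensorRel R M B ≤
      (tensorRel R M' B).comap (LinearMap.rTensor B h.toAddMonoidHom.toIntLinearMap) := by
  refine Submodule.span_le.mpr ?_
  rintro x ⟨r, m, b, rfl⟩
  show LinearMap.rTensor B h.toAddMonoidHom.toIntLinearMap _ ∈ tensorRel R M' B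
  have hx : LinearMap.rTensor B h.toAddMonoidHom.toIntLinearMap
      ((op r • m) ⊗ₜ[ℤ] b - m ⊗ₜ[ℤ] (r • b)) = (op r • h m) ⊗ₜ[ℤ] b - h m ⊗ₜ[ℤ] (r • b) := by
    rw [map_sub, LinearMap.rTensor_tmul, LinearMap.rTensor_tmul]
    simp only [AddMonoidHom.coe_toIntLinearMap, LinearMap.toAddMonoidHom_coe, h.map_smul]
  rw [hx]
  exact Submodule.subset_span ⟨r, h m, b, rfl⟩

/-- Functoriality of `M ⊗_R -` in left `R`-module maps (as a `ℤ`-linear map). -/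
noncomputable def mapB (g : B →ₗ[R] B') : RTensor R M B →ₗ[ℤ] RTensor R M B' :=
  Submodule.mapQ _ _ _ (rel_le_B R g)

/-- Functoriality of `- ⊗_R B` in right `R`-module maps (as a `ℤ`-linear map). -/
noncomputable def mapM (h : M →ₗ[Rᵐᵒᵖ] M') : RTensor R M B →ₗ[ℤ] RTensor R M' B :=
  Submodule.mapQ _ _ _ (rel_le_M R h)

@[simp] theorem mapB_mk (g : B →ₗ[R] B') (y : TensorProduct ℤ M B) :
    mapB R g (Submodule.Quotient.mk y) =
      Submodule.Quotient.mk (LinearMap.lTensor M g.toAddMonoidHom.toIntLinearMap y) :=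
  rfl

@[simp] theorem mapM_mk (h : M →ₗ[Rᵐᵒᵖ] M') (y : TensorProduct ℤ M B) :
    mapM R h (Submodule.Quotient.mk y) =
      Submodule.Quotient.mk (LinearMap.rTensor B h.toAddMonoidHom.toIntLinearMap y) :=
  rfl

section SAction

variable [Module Sᵐᵒᵖ B] [SMulCommClass R Sᵐᵒᵖ B]

/-- The right action of `s : S` on an `(R,S)`-bimodule, as a left `R`-linear map. -/
def sEndo (s : Sᵐᵒᵖ) : B →ₗ[R] B where
  toFun b := s • b
  map_add' x y := smul_add s x y
  map_smul' r b := (smul_comm r s b).symm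

variable (M B)

/-- The right `S`-action on `M ⊗_R B` as a ring homomorphism `Sᵐᵒᵖ → End_ℤ (M ⊗_R B)`. -/
noncomputable def rho : Sᵐᵒᵖ →+* Module.End ℤ (RTensor R M B) where
  toFun s := mapB R (sEndo R S (B := B) s)
  map_one' := by
    refine Submodule.linearMap_qext _ (TensorProduct.ext' fun m b => ?_)
    show mapB R (sEndo R S (B := B) 1) (Submodule.Quotient.mk (m ⊗ₜ[ℤ] b)) =
      Submodule.Quotient.mk (m ⊗ₜ[ℤ] b)
    rw [mapB_mk]
    congr 1
    rw [LinearMap.lTensor_tmul]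
    simp [sEndo]
  map_mul' s s' := by
    refine Submodule.linearMap_qext _ (TensorProduct.ext' fun m b => ?_)
    show mapB R (sEndo R S (B := B) (s * s')) (Submodule.Quotient.mk (m ⊗ₜ[ℤ] b)) =
      mapB R (sEndo R S (B := B) s) (mapB R (sEndo R S (B := B) s')
        (Submodule.Quotient.mk (m ⊗ₜ[ℤ] b)))
    rw [mapB_mk, mapB_mk, mapB_mk]
    congr 1
    rw [LinearMap.lTensor_tmul, LinearMap.lTensor_tmul, LinearMap.lTensor_tmul]
    simp only [AddMonoidHom.coe_toIntLinearMap, LinearMap.toAddMonoidHom_coe]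
    simp [sEndo, mul_smul]
  map_zero' := by
    refine Submodule.linearMap_qext _ (TensorProduct.ext' fun m b => ?_)
    show mapB R (sEndo R S (B := B) 0) (Submodule.Quotient.mk (m ⊗ₜ[ℤ] b)) = 0
    rw [mapB_mk, LinearMap.lTensor_tmul]
    simp [sEndo]
  map_add' s s' := by
    refine Submodule.linearMap_qext _ (TensorProduct.ext' fun m b => ?_)
    show mapB R (sEndo R S (B := B) (s + s')) (Submodule.Quotient.mk (m ⊗ₜ[ℤ] b)) =
      mapB R (sEndo R S (B := B) s) (Submodule.Quotient.mk (m ⊗ₜ[ℤ] b)) +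
        mapB R (sEndo R S (B := B) s') (Submodule.Quotient.mk (m ⊗ₜ[ℤ] b))
    rw [mapB_mk, mapB_mk, mapB_mk, ← Submodule.Quotient.mk_add]
    congr 1
    rw [LinearMap.lTensor_tmul, LinearMap.lTensor_tmul, LinearMap.lTensor_tmul]
    simp only [AddMonoidHom.coe_toIntLinearMap, LinearMap.toAddMonoidHom_coe]
    simp [sEndo, add_smul, TensorProduct.tmul_add]

/-- The right `S`-module structure on `M ⊗_R B` for an `(R,S)`-bimodule `B`. -/
noncomputable instance instModS : Module Sᵐᵒᵖ (RTensor R M B) :=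
  Module.compHom _ (rho R S M B)

theorem smul_mk (s : Sᵐᵒᵖ) (y : TensorProduct ℤ M B) :
    s • (Submodule.Quotient.mk y : RTensor R M B) =
      Submodule.Quotient.mk
        (LinearMap.lTensor M ((sEndo R S (B := B) s).toAddMonoidHom.toIntLinearMap) y) :=
  rfl

@[simp] theorem smul_rtmul (s : Sᵐᵒᵖ) (m : M) (b : B) :
    s • rtmul R M B m b = rtmul R M B m (s • b) :=
  rfl

end SAction

end Tensor

end MTM
namespace MTM

open MulOpposite TensorProduct

variable (R : Type u) [Ring R] (S : Type u) [Ring S]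

section TensorMaps

variable (M : Type u) [AddCommGroup M] [Module Rᵐᵒᵖ M]
variable {M' : Type u} [AddCommGroup M'] [Module Rᵐᵒᵖ M']
variable (B : Type u) [AddCommGroup B] [Module R B] [Module Sᵐᵒᵖ B] [SMulCommClass R Sᵐᵒᵖ B]
variable {B' : Type u} [AddCommGroup B'] [Module R B'] [Module Sᵐᵒᵖ B'] [SMulCommClass R Sᵐᵒᵖ B']

/-- Functoriality of `M ⊗_R -` in maps of `(R,S)`-bimodules, as a map of right
`S`-modules. -/
noncomputable def mapBS (g : B →ₗ[R] B') (hg : ∀ (s : Sᵐᵒᵖ) (b : B), g (s • b) = s • g b) :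
    RTensor R M B →ₗ[Sᵐᵒᵖ] RTensor R M B' where
  toFun := mapB R g
  map_add' := map_add _
  map_smul' s x := by
    obtain ⟨y, rfl⟩ := Submodule.Quotient.mk_surjective _ x
    show mapB R g (s • Submodule.Quotient.mk y) = s • mapB R g (Submodule.Quotient.mk y)
    rw [smul_mk R S, mapB_mk, mapB_mk, smul_mk R S,
      ← LinearMap.comp_apply, ← LinearMap.comp_apply, ← LinearMap.lTensor_comp,
      ← LinearMap.lTensor_comp]
    have hcomp : g.toAddMonoidHom.toIntLinearMap ∘ₗ
          (sEndo R S (B := B) s).toAddMonoidHom.toIntLinearMap =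
        (sEndo R S (B := B') s).toAddMonoidHom.toIntLinearMap ∘ₗ
          g.toAddMonoidHom.toIntLinearMap := by
      ext b
      exact hg s b
    rw [hcomp]

/-- Functoriality of `- ⊗_R B` in maps of right `R`-modules, as a map of right
`S`-modules. -/
noncomputable def mapMS (h : M →ₗ[Rᵐᵒᵖ] M') :
    RTensor R M B →ₗ[Sᵐᵒᵖ] RTensor R M' B where
  toFun := mapM R h
  map_add' := map_add _
  map_smul' s x := by
    obtain ⟨y, rfl⟩ := Submodule.Quotient.mk_surjective _ x
    show mapM R h (s • Submodule.Quotient.mk y) = s • mapM R h (Submodule.Quotient.mk y)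
    rw [smul_mk R S, mapM_mk, mapM_mk, smul_mk R S,
      ← LinearMap.comp_apply, ← LinearMap.comp_apply, LinearMap.rTensor_comp_lTensor,
      LinearMap.lTensor_comp_rTensor]

end TensorMaps

section Canonical

variable (M : Type u) [AddCommGroup M] [Module Rᵐᵒᵖ M]

/-- The canonical map `M ⊗_R (∏ᵢ Lᵢ) → ∏ᵢ (M ⊗_R Lᵢ)` for a family of left
`R`-modules, as a `ℤ`-linear map. -/
noncomputable def canonicalL {ι' : Type u} (L : ι' → Type u)
    [∀ i, AddCommGroup (L i)] [∀ i, Module R (L i)] :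
    RTensor R M (∀ i, L i) →ₗ[ℤ] ∀ i, RTensor R M (L i) :=
  LinearMap.pi fun i => mapB R (LinearMap.proj i)

/-- The canonical map `M ⊗_R (∏ᵢ Lᵢ) → ∏ᵢ (M ⊗_R Lᵢ)` for a family of
`(R,S)`-bimodules, as a map of right `S`-modules. -/
noncomputable def canonicalB {ι' : Type u} (L : ι' → Type u)
    [∀ i, AddCommGroup (L i)] [∀ i, Module R (L i)] [∀ i, Module Sᵐᵒᵖ (L i)]
    [∀ i, SMulCommClass R Sᵐᵒᵖ (L i)] :
    RTensor R M (∀ i, L i) →ₗ[Sᵐᵒᵖ] ∀ i, RTensor R M (L i) :=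
  LinearMap.pi fun i => mapBS R S M (∀ j, L j) (LinearMap.proj i) (fun _ _ => rfl)

/-- The canonical map `(∏_λ M_λ) ⊗_R B → ∏_λ (M_λ ⊗_R B)` for a family of right
`R`-modules and an `(R,S)`-bimodule `B`, as a map of right `S`-modules. -/
noncomputable def canonicalM {ι' : Type u} (N : ι' → Type u)
    [∀ i, AddCommGroup (N i)] [∀ i, Module Rᵐᵒᵖ (N i)]
    (B : Type u) [AddCommGroup B] [Module R B] [Module Sᵐᵒᵖ B] [SMulCommClass R Sᵐᵒᵖ B] :
    RTensor R (∀ i, N i) B →ₗ[Sᵐᵒᵖ] ∀ i, RTensor R (N i) B :=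
  LinearMap.pi fun i => mapMS R S (∀ j, N j) B (LinearMap.proj i)

end Canonical

section UnitMap

variable (M : Type u) [AddCommGroup M] [Module Rᵐᵒᵖ M]
variable (B : Type u) [AddCommGroup B] [Module R B] [Module Rᵐᵒᵖ B] [SMulCommClass R Rᵐᵒᵖ B]

/-- For an `(R,R)`-bimodule `B` and a central-ish element `e` (e.g. `1 ∈ S` for a ring
extension `R → S`), the canonical map `M → M ⊗_R B`, `a ↦ a ⊗ e`, as a map of right
`R`-modules. -/
noncomputable def unitMap (e : B) (he : ∀ r : R, r • e = op r • e) :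
    M →ₗ[Rᵐᵒᵖ] RTensor R M B where
  toFun m := rtmul R M B m e
  map_add' m m' := by
    show Submodule.Quotient.mk _ = Submodule.Quotient.mk _ + Submodule.Quotient.mk _
    rw [← Submodule.Quotient.mk_add, TensorProduct.add_tmul]
  map_smul' r m := by
    show rtmul R M B (r • m) e = r • rtmul R M B m e
    rw [smul_rtmul]
    rw [rtmul, rtmul, Submodule.Quotient.eq]
    have : (r • e : B) = (r.unop : R) • e := (he r.unop).symm
    rw [this]
    exact Submodule.subset_span ⟨r.unop, m, e, by rw [op_unop]⟩

end UnitMap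

end MTM
namespace MTM

open MulOpposite

variable (R : Type u) [Ring R] (S : Type u) [Ring S]

/-! ### pp formulas for `(R,S)`-bimodules -/

/-- The action of a formal coefficient `∑ (r,s)` of the bimodule language on an
element of an `(R,S)`-bimodule: `b ↦ ∑ r b s`. -/
def cAct (c : List (R × S)) {B : Type v} [AddCommGroup B] [Module R B] [Module Sᵐᵒᵖ B]
    (b : B) : B :=
  (c.map fun p => p.1 • (op p.2 • b)).sum

/-- A pp formula for `(R,S)`-bimodules (equivalently, for right `Rᵒᵖ ⊗ S`-modules):
coefficients are formal sums of pairs `(r,s)`, acting by `x ↦ ∑ r x s`. -/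
structure BiPP (ι : Type) : Type (max u 1) where
  κ : Type
  ε : Type
  [fintκ : Fintype κ]
  [fintε : Fintype ε]
  A : Matrix ι ε (List (R × S))
  B : Matrix κ ε (List (R × S))

attribute [instance] BiPP.fintκ BiPP.fintε

variable {R S} in
/-- Solution set of a bimodule pp formula in an `(R,S)`-bimodule. -/
def BiPP.sol {ι : Type} [Fintype ι] (θ : BiPP R S ι) (Bm : Type v) [AddCommGroup Bm]
    [Module R Bm] [Module Sᵐᵒᵖ Bm] : Set (ι → Bm) :=
  { a | ∃ b : θ.κ → Bm, ∀ j : θ.ε,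
      (∑ i, cAct R S (θ.A i j) (a i)) + (∑ k, cAct R S (θ.B k j) (b k)) = 0 }

/-- A bundled `(R,S)`-bimodule. -/
structure Bimod : Type (u + 1) where
  carrier : Type u
  [addCommGroup : AddCommGroup carrier]
  [modR : Module R carrier]
  [modSop : Module Sᵐᵒᵖ carrier]
  [smulComm : SMulCommClass R Sᵐᵒᵖ carrier]

attribute [instance] Bimod.addCommGroup Bimod.modR Bimod.modSop Bimod.smulComm

instance : CoeSort (Bimod R S) (Type u) := ⟨Bimod.carrier⟩

/-- Bundling an `(R,S)`-bimodule. -/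
def Bimod.of (B : Type u) [AddCommGroup B] [Module R B] [Module Sᵐᵒᵖ B]
    [SMulCommClass R Sᵐᵒᵖ B] : Bimod R S :=
  ⟨B⟩

/-- A pp-pair for `(R,S)`-bimodules. -/
structure BiPPPair : Type (max u 1) where
  n : ℕ
  num : BiPP R S (Fin n)
  den : BiPP R S (Fin n)
  le : ∀ Bm : Bimod R S, den.sol Bm ⊆ num.sol Bm

variable {R S} in
/-- Closedness of a bimodule pp-pair on a bimodule. -/
def BiPPPair.ClosedOn (p : BiPPPair R S) (Bm : Type v) [AddCommGroup Bm] [Module R Bm]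
    [Module Sᵐᵒᵖ Bm] : Prop :=
  p.num.sol Bm = p.den.sol Bm

/-- The class of bimodules defined by closure of a set of bimodule pp-pairs. -/
def biDefinedBy (Φ : Set (BiPPPair R S)) : Set (Bimod R S) :=
  { Bm | ∀ p ∈ Φ, p.ClosedOn Bm }

/-- Definable subcategories of the category `R-Mod-S` of `(R,S)`-bimodules. -/
def IsDefinableBi (𝓑 : Set (Bimod R S)) : Prop :=
  ∃ Φ : Set (BiPPPair R S), 𝓑 = biDefinedBy R S Φ

/-- The smallest definable subcategory of `R-Mod-S` containing `X`. -/
def genBi (X : Set (Bimod R S)) : Set (Bimod R S) :=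
  ⋂₀ { 𝓑 | IsDefinableBi R S 𝓑 ∧ X ⊆ 𝓑 }

/-- `θ ≤_𝓑 θ'` for a class `𝓑` of bimodules. -/
def BiLeOn (𝓑 : Set (Bimod R S)) {ι : Type} [Fintype ι] (θ θ' : BiPP R S ι) : Prop :=
  ∀ Bm ∈ 𝓑, θ.sol Bm ⊆ θ'.sol Bm

/-! ### Partitioned tuples, `(σ:φ)` and atomicity with respect to a bimodule -/

/-- The index type of a `ν`-partitioned tuple: `k` blocks, the `t`-th of size `ν t`. -/
abbrev PIdx {k : ℕ} (ν : Fin k → ℕ) : Type := (t : Fin k) × Fin (ν t)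

/-- The tensor product of matching partitioned tuples: the `k`-tuple
`(ā₁ ⊗ b̄₁, …, ā_k ⊗ b̄_k)` where `ā_t ⊗ b̄_t = ∑_j a_{tj} ⊗ b_{tj}`. -/
noncomputable def ptensor (M : Type u) [AddCommGroup M] [Module Rᵐᵒᵖ M] (B : Type u)
    [AddCommGroup B] [Module R B] {k : ℕ} {ν : Fin k → ℕ}
    (a : PIdx ν → M) (b : PIdx ν → B) : Fin k → RTensor R M B :=
  fun t => ∑ j : Fin (ν t), rtmul R M B (a ⟨t, j⟩) (b ⟨t, j⟩)

variable {R}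

/-- The pp-type of `ā` in `M` is generated by `φ`: `pp^M(ā) = {ψ : φ ≤ ψ}`. -/
def GeneratedBy {ι : Type} [Fintype ι] {M : Type u} [AddCommGroup M] [Module Rᵐᵒᵖ M]
    (a : ι → M) (φ : PP R ι) : Prop :=
  ∀ ψ : PP R ι, a ∈ ψ.sol M ↔ φ.Le ψ

/-- The pp-type of `ā` in `M` is `𝒳`-generated by `φ`: `pp^M(ā) = {ψ : φ ≤_𝒳 ψ}`. -/
def GeneratedByOn (𝒳 : Set (ModuleCat.{u} Rᵐᵒᵖ)) {ι : Type} [Fintype ι] {M : Type u}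
    [AddCommGroup M] [Module Rᵐᵒᵖ M] (a : ι → M) (φ : PP R ι) : Prop :=
  ∀ ψ : PP R ι, a ∈ ψ.sol M ↔ LeOn R 𝒳 φ ψ

variable (R)

/-- An assignment `(σ, φ) ↦ (σ:φ)` of a bimodule pp formula to each pp formula `σ`
for right `S`-modules (in `k` free variables) and each matching partitioned pp
formula `φ` for right `R`-modules. -/
def ColonAsgn : Type (max u 1) :=
  ∀ (k : ℕ) (ν : Fin k → ℕ), PP S (Fin k) → PP R (PIdx ν) → BiPP R S (PIdx ν)

/-- The characterizing property of the assignment `(σ, φ) ↦ (σ:φ)`: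
(1) if `ā ∈ φ(M)` and `b̄ ∈ (σ:φ)(B)` then `ā ⊗ b̄ ∈ σ(M ⊗_R B)`;
(2) if `pp^M(ā)` is generated by `φ` then `ā ⊗ b̄ ∈ σ(M ⊗_R B)` iff `b̄ ∈ (σ:φ)(B)`. -/
def ColonSpec (c : ColonAsgn R S) : Prop :=
  ∀ (k : ℕ) (ν : Fin k → ℕ) (σ : PP S (Fin k)) (φ : PP R (PIdx ν))
    (M : Type u) [AddCommGroup M] [Module Rᵐᵒᵖ M]
    (Bm : Type u) [AddCommGroup Bm] [Module R Bm] [Module Sᵐᵒᵖ Bm]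
    [SMulCommClass R Sᵐᵒᵖ Bm] (a : PIdx ν → M) (b : PIdx ν → Bm),
    (a ∈ φ.sol M → b ∈ (c k ν σ φ).sol Bm →
      ptensor R M Bm a b ∈ σ.sol (RTensor R M Bm)) ∧
    (GeneratedBy a φ →
      (ptensor R M Bm a b ∈ σ.sol (RTensor R M Bm) ↔ b ∈ (c k ν σ φ).sol Bm))

/-- `M` is atomic with respect to the `(R,S)`-bimodule `B` (relative to a choice `c`
of the assignment `(σ,φ) ↦ (σ:φ)`): for every partitioned finite tuple `ā` from `M`
and every pp formula `σ` for right `S`-modules there is `φ ∈ pp^M(ā)` such that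
`(σ:φ)(B)` is the largest among the `(σ:ψ)(B)` with `ψ ∈ pp^M(ā)`. -/
def AtomicWrt (c : ColonAsgn R S) (M : Type u) [AddCommGroup M] [Module Rᵐᵒᵖ M]
    (Bm : Type u) [AddCommGroup Bm] [Module R Bm] [Module Sᵐᵒᵖ Bm] : Prop :=
  ∀ (k : ℕ) (ν : Fin k → ℕ) (σ : PP S (Fin k)) (a : PIdx ν → M),
    ∃ φ : PP R (PIdx ν), a ∈ φ.sol M ∧
      ∀ ψ : PP R (PIdx ν), a ∈ ψ.sol M → (c k ν σ ψ).sol Bm ⊆ (c k ν σ φ).sol Bm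

/-! ### Mittag-Leffler modules, atomic modules -/

/-- `M` is Mittag-Leffler: the canonical map `M ⊗_R ∏ᵢ Lᵢ → ∏ᵢ (M ⊗_R Lᵢ)` is
injective for every family of left `R`-modules. -/
def IsML (M : Type u) [AddCommGroup M] [Module Rᵐᵒᵖ M] : Prop :=
  ∀ (ι' : Type u) (L : ι' → Type u) (_ : ∀ i, AddCommGroup (L i))
    (_ : ∀ i, Module R (L i)), Function.Injective (canonicalL R M L)

/-- `M` is `𝒳`-Mittag-Leffler for a class `𝒳` of left `R`-modules. -/
def IsMLOn (𝒳 : Set (ModuleCat.{u} R)) (M : Type u) [AddCommGroup M] [Module Rᵐᵒᵖ M] :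
    Prop :=
  ∀ (ι' : Type u) (L : ι' → Type u) (_ : ∀ i, AddCommGroup (L i))
    (_ : ∀ i, Module R (L i)),
    (∀ i, ModuleCat.of R (L i) ∈ 𝒳) → Function.Injective (canonicalL R M L)

/-- `M` is `D`-atomic: the pp-type of every finite tuple from `M` is `D`-finitely
generated. -/
def AtomicOn (D : Set (ModuleCat.{u} Rᵐᵒᵖ)) (M : Type u) [AddCommGroup M]
    [Module Rᵐᵒᵖ M] : Prop :=
  ∀ (n : ℕ) (a : Fin n → M), ∃ φ : PP R (Fin n), GeneratedByOn D a φ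

/-- The elementary dual `⟨K⟩ᵈ ⊆ Mod-R` of the definable subcategory of `R-Mod`
generated by a class `K` of left `R`-modules: it is defined by the pp-pairs for right
`R`-modules whose (elementary) dual pp-pair is closed on `⟨K⟩`. -/
def dualCat (K : Set (ModuleCat.{u} R)) : Set (ModuleCat.{u} Rᵐᵒᵖ) :=
  definedBy R { p : PPPair R |
    ∀ L ∈ genL R K, (p.num.dual).solL L = (p.den.dual).solL L }

/-! ### Pure projectivity, finite genericity, pure cogenerators -/

/-- A left `R`-module is pure-projective if it is a direct summand of a direct sum of
finitely presented left `R`-modules. -/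
def IsPureProjL (B : Type u) [AddCommGroup B] [Module R B] : Prop :=
  ∃ (ι : Type u) (_ : DecidableEq ι) (F : ι → Type u) (_ : ∀ i, AddCommGroup (F i))
    (_ : ∀ i, Module R (F i)) (_ : ∀ i, Module.FinitePresentation R (F i))
    (e : B →ₗ[R] DirectSum ι F) (p : DirectSum ι F →ₗ[R] B), p.comp e = LinearMap.id

/-- `M` is finitely generic in the definable subcategory `D`: for every pp formula
`φ` there is a tuple from `M` whose pp-type is `D`-generated by `φ`. -/
def FinGeneric (D : Set (ModuleCat.{u} Rᵐᵒᵖ)) (M : Type u) [AddCommGroup M]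
    [Module Rᵐᵒᵖ M] : Prop :=
  ModuleCat.of Rᵐᵒᵖ M ∈ D ∧
    ∀ (ι : Type) (_ : Fintype ι) (φ : PP R ι), ∃ a : ι → M, GeneratedByOn D a φ

variable {R S}

/-- The pp-type of a tuple in a bimodule is `𝓑`-generated by `θ`. -/
def BiGeneratedByOn (𝓑 : Set (Bimod R S)) {ι : Type} [Fintype ι] {Bm : Type u}
    [AddCommGroup Bm] [Module R Bm] [Module Sᵐᵒᵖ Bm] (b : ι → Bm) (θ : BiPP R S ι) :
    Prop :=
  ∀ θ' : BiPP R S ι, b ∈ θ'.sol Bm ↔ BiLeOn R S 𝓑 θ θ'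

variable (R S)

/-- A bimodule is finitely generic in a definable subcategory `𝓑` of `R-Mod-S`. -/
def FinGenericBi (𝓑 : Set (Bimod R S)) (Bm : Type u) [AddCommGroup Bm] [Module R Bm]
    [Module Sᵐᵒᵖ Bm] [SMulCommClass R Sᵐᵒᵖ Bm] : Prop :=
  Bimod.of R S Bm ∈ 𝓑 ∧
    ∀ (ι : Type) (_ : Fintype ι) (θ : BiPP R S ι), ∃ b : ι → Bm, BiGeneratedByOn 𝓑 b θ

end MTM
namespace MTM

open MulOpposite

variable (R : Type u) [Ring R] (S : Type u) [Ring S]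

/-! ### Tensor extension of definable subcategories -/

section TensorExt

variable (B : Type u) [AddCommGroup B] [Module R B] [Module Sᵐᵒᵖ B] [SMulCommClass R Sᵐᵒᵖ B]

/-- The set `{M ⊗_R B : M ∈ D}` of right `S`-modules. -/
noncomputable def tensorExtSet (D : Set (ModuleCat.{u} Rᵐᵒᵖ)) : Set (ModuleCat.{u} Sᵐᵒᵖ) :=
  { N | ∃ M ∈ D, N = ModuleCat.of Sᵐᵒᵖ (RTensor R M B) }

/-- The tensor extension `D ⊗_R B`: the definable subcategory of `Mod-S` generated by
`{M ⊗_R B : M ∈ D}`. -/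
noncomputable def tensorExt (D : Set (ModuleCat.{u} Rᵐᵒᵖ)) : Set (ModuleCat.{u} Sᵐᵒᵖ) :=
  gen S (tensorExtSet R S B D)

end TensorExt

/-- `D ⊗ 𝓑` for a definable subcategory `D` of `Mod-R` and a definable subcategory
`𝓑` of `R-Mod-S`: the definable subcategory of `Mod-S` generated by the modules
`M ⊗_R B` with `M ∈ D`, `B ∈ 𝓑`. -/
noncomputable def tensorProd (D : Set (ModuleCat.{u} Rᵐᵒᵖ)) (𝓑 : Set (Bimod R S)) :
    Set (ModuleCat.{u} Sᵐᵒᵖ) :=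
  gen S { N | ∃ M ∈ D, ∃ Bm ∈ 𝓑, N = ModuleCat.of Sᵐᵒᵖ (RTensor R M Bm) }

/-! ### Directed colimits -/

open CategoryTheory CategoryTheory.Limits in
/-- `M` is a directed colimit of modules satisfying `P`. -/
def IsDirectedColimitOf (M : ModuleCat.{u} Rᵐᵒᵖ) (P : ModuleCat.{u} Rᵐᵒᵖ → Prop) :
    Prop :=
  ∃ (J : Type u) (_ : Preorder J) (_ : IsDirected J (· ≤ ·)) (_ : Nonempty J)
    (F : J ⥤ ModuleCat.{u} Rᵐᵒᵖ) (c : Cocone F),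
    Nonempty (IsColimit c) ∧ Nonempty (c.pt ≅ M) ∧ ∀ j, P (F.obj j)

/-! ### Elementary embeddings of rings -/

open FirstOrder in
/-- `f : R →+* S` is an elementary embedding of rings: there is a model-theoretic
elementary embedding (for the first-order language of rings) whose underlying
function is `f`.  (Elementary embeddings preserve and reflect all first-order
formulas at all tuples of parameters from `R`.) -/
def IsElemRingEmb (f : R →+* S) : Prop :=
  letI := FirstOrder.Ring.compatibleRingOfRing R
  letI := FirstOrder.Ring.compatibleRingOfRing S
  ∃ F : Language.ring.ElementaryEmbedding R S, ∀ r : R, F r = f r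

/-! ### Bimodule structures along a ring homomorphism -/

section AlongHom

variable (f : R →+* S)

/-- The left `R`-module structure on `S` along `f`. -/
def modLeft : Module R S := Module.compHom S f

/-- The right `R`-module structure on `S` along `f`. -/
def modRight : Module Rᵐᵒᵖ S := Module.compHom S (RingHom.op f)

/-- `S` is an `(R,S)`-bimodule along `f`. -/
theorem smulComm_RS :
    letI := modLeft R S f
    SMulCommClass R Sᵐᵒᵖ S := by
  letI := modLeft R S f
  constructor
  intro r s x
  show f r * (x * s.unop) = (f r * x) * s.unop
  rw [mul_assoc]

/-- `S` is an `(R,R)`-bimodule along `f`. -/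
theorem smulComm_RR :
    letI := modLeft R S f
    letI := modRight R S f
    SMulCommClass R Rᵐᵒᵖ S := by
  letI := modLeft R S f
  letI := modRight R S f
  constructor
  intro r r' x
  show f r * (x * f r'.unop) = (f r * x) * f r'.unop
  rw [mul_assoc]

end AlongHom

end MTM
namespace MTM

open MulOpposite

variable (R : Type u) [Ring R] (S : Type u) [Ring S]

/-- A pure embedding of `(R,S)`-bimodules: an injective map of bimodules which
reflects solution sets of bimodule pp formulas. -/
def IsBiPureEmb {B B' : Type u} [AddCommGroup B] [Module R B] [Module Sᵐᵒᵖ B]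
    [AddCommGroup B'] [Module R B'] [Module Sᵐᵒᵖ B']
    (g : B →ₗ[R] B') (_ : ∀ (s : Sᵐᵒᵖ) (b : B), g (s • b) = s • g b) : Prop :=
  Function.Injective g ∧
    ∀ (ι : Type) (_ : Fintype ι) (θ : BiPP R S ι) (a : ι → B),
      (fun i => g (a i)) ∈ θ.sol B' → a ∈ θ.sol B

/-- The ring `S`, viewed as an `(R,S)`-bimodule (and as an `(R,R)`-bimodule) along a
ring homomorphism `f : R →+* S`. -/
def SAlong (f : R →+* S) : Type u := S

namespace SAlong

variable (f : R →+* S)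

instance : AddCommGroup (SAlong R S f) := inferInstanceAs (AddCommGroup S)
instance : Module R (SAlong R S f) := Module.compHom S f
instance : Module Sᵐᵒᵖ (SAlong R S f) := inferInstanceAs (Module Sᵐᵒᵖ S)
instance : Module Rᵐᵒᵖ (SAlong R S f) := Module.compHom S (RingHom.op f)

instance : SMulCommClass R Sᵐᵒᵖ (SAlong R S f) := smulComm_RS R S f

instance : SMulCommClass R Rᵐᵒᵖ (SAlong R S f) := smulComm_RR R S f

/-- The element `1 ∈ S`. -/
def one : SAlong R S f := (1 : S)

theorem smul_one : ∀ r : R, r • (one R S f) = op r • (one R S f) := by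
  intro r
  show f r * (1 : S) = (1 : S) * f r
  rw [mul_one, one_mul]

end SAlong

end MTM
namespace MTM

open MulOpposite FirstOrder Language in
private lemma realize_foldr_add {A : Type*} [Ring A] [FirstOrder.Ring.CompatibleRing A]
    {α : Type*} {υ : Type*} {n : ℕ} (e : υ → Fin n)
    (v : α → A) (xs : Fin n → A) (l : List (α × υ × α)) (c : α) :
    Term.realize (Sum.elim v xs)
      (l.foldr (fun p acc =>
        (Term.var (Sum.inl p.1) * Term.var (Sum.inr (e p.2.1)) *
          Term.var (Sum.inl p.2.2) : Language.ring.Term (α ⊕ Fin n)) + acc)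
        (Term.var (Sum.inl c)))
      = (l.map fun p => v p.1 * xs (e p.2.1) * v p.2.2).sum + v c := by
  induction l with
  | nil => simp
  | cons p l ih => simp [ih, add_assoc]

open MulOpposite FirstOrder Language in
private lemma realize_system {A : Type*} [Ring A] [FirstOrder.Ring.CompatibleRing A]
    {α : Type*} {υ J : Type*} [Fintype J] {n : ℕ} (e : υ ≃ Fin n)
    (terms : J → List (α × υ × α)) (w : J → α) (v : α → A) :
    (BoundedFormula.exs
      (((Finset.univ : Finset J).toList.map fun j =>
        Term.bdEqual
          ((terms j).foldr (fun p acc =>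
            (Term.var (Sum.inl p.1) * Term.var (Sum.inr (e p.2.1)) *
              Term.var (Sum.inl p.2.2) : Language.ring.Term (α ⊕ Fin n)) + acc)
            (Term.var (Sum.inl (w j))))
          0).foldr (· ⊓ ·) ⊤)).Realize v
    ↔ ∃ x : υ → A, ∀ j, ((terms j).map fun p => v p.1 * x p.2.1 * v p.2.2).sum + v (w j) = 0 := by
  rw [BoundedFormula.realize_exs]
  constructor
  · rintro ⟨xs, hxs⟩
    rw [BoundedFormula.realize_foldr_inf] at hxs
    refine ⟨fun u => xs (e u), fun j => ?_⟩
    have h := hxs _ (List.mem_map_of_mem (Finset.mem_toList.2 (Finset.mem_univ j)))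
    rw [BoundedFormula.realize_bdEqual, realize_foldr_add (⇑e) v xs] at h
    simpa using h
  · rintro ⟨x, hx⟩
    refine ⟨fun i => x (e.symm i), ?_⟩
    rw [BoundedFormula.realize_foldr_inf]
    intro ψ hψ
    simp only [List.mem_map, Finset.mem_toList, Finset.mem_univ, true_and] at hψ
    obtain ⟨j, rfl⟩ := hψ
    rw [BoundedFormula.realize_bdEqual, realize_foldr_add (⇑e) v _]
    simpa using hx j

open MulOpposite FirstOrder Language in
private lemma elem_transfer {R S : Type u} [Ring R] [Ring S] (f : R →+* S)
    (hf : IsElemRingEmb R S f) (υ J : Type u) [Fintype υ] [Fintype J]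
    (terms : J → List (R × υ × R)) (w : J → R)
    (hS : ∃ x : υ → S, ∀ j,
      ((terms j).map fun p => f p.1 * x p.2.1 * f p.2.2).sum + f (w j) = 0) :
    ∃ t : υ → R, ∀ j, ((terms j).map fun p => p.1 * t p.2.1 * p.2.2).sum + w j = 0 := by
  classical
  letI := FirstOrder.Ring.compatibleRingOfRing R
  letI := FirstOrder.Ring.compatibleRingOfRing S
  obtain ⟨F, hF⟩ := hf
  let e : υ ≃ Fin (Fintype.card υ) := Fintype.equivFin υ
  have h2 := (realize_system (A := S) e terms w (fun r => f r)).mpr hS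
  have hFf : (fun r : R => (f r : S)) = ⇑F ∘ id := funext fun r => (hF r).symm
  rw [hFf] at h2
  have h4 := (F.map_formula _ id).mp h2
  have h5 := (realize_system (A := R) e terms w id).mp h4
  obtain ⟨t, ht⟩ := h5
  exact ⟨t, fun j => by simpa using ht j⟩

section Statement18Aux

open MulOpposite FirstOrder Language

variable {R S : Type u} [Ring R] [Ring S] (f : R →+* S)
variable (M : Type u) [AddCommGroup M] [Module Rᵐᵒᵖ M]

/-- Generators of the balancing relations in the free right `S`-module on `M`. -/
private noncomputable def genElt : (M × M) ⊕ (R × M) → (M →₀ S) := fun γ =>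
  Sum.elim
    (fun p => Finsupp.single (p.1 + p.2) 1 - Finsupp.single p.1 1 - Finsupp.single p.2 1)
    (fun p => Finsupp.single (op p.1 • p.2) 1 - Finsupp.single p.2 (f p.1)) γ

private noncomputable def relK : Submodule Sᵐᵒᵖ (M →₀ S) := Submodule.span Sᵐᵒᵖ (Set.range (genElt f M))

private abbrev QMod : Type u := (M →₀ S) ⧸ relK f M

private noncomputable def gfun (m : M) : QMod f M := Submodule.Quotient.mk (Finsupp.single m 1)

private lemma gfun_add (m m' : M) : gfun f M (m + m') = gfun f M m + gfun f M m' := by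
  have h : (Finsupp.single (m + m') 1 - Finsupp.single m 1 - Finsupp.single m' 1 : M →₀ S)
      ∈ relK f M := Submodule.subset_span ⟨Sum.inl (m, m'), rfl⟩
  rw [gfun, gfun, gfun, ← Submodule.mkQ_apply, ← Submodule.mkQ_apply, ← Submodule.mkQ_apply,
    ← map_add, Submodule.mkQ_apply, Submodule.mkQ_apply]
  exact (Submodule.Quotient.eq _).mpr (by simpa [sub_sub] using h)

private lemma gfun_smul (r : R) (m : M) :
    gfun f M (op r • m) = (op (f r) : Sᵐᵒᵖ) • gfun f M m := by
  have h : (Finsupp.single (op r • m) 1 - Finsupp.single m (f r) : M →₀ S) ∈ relK f M :=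
    Submodule.subset_span ⟨Sum.inr (r, m), rfl⟩
  have h2 : (op (f r) : Sᵐᵒᵖ) • gfun f M m = Submodule.Quotient.mk (Finsupp.single m (f r)) := by
    rw [gfun, ← Submodule.mkQ_apply, ← map_smul, Submodule.mkQ_apply]
    congr 1
    rw [Finsupp.smul_single]
    congr 1
    exact (op_smul_eq_mul _ _).trans (one_mul _)
  rw [h2, gfun, Submodule.Quotient.eq]
  exact h

private lemma key_reflect (hf : IsElemRingEmb R S f) (ι : Type) [Fintype ι] (φ : PP R ι)
    (a : ι → M) (b : φ.κ → QMod f M)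
    (h : ∀ j, (∑ i, (op (f (φ.A i j)) : Sᵐᵒᵖ) • gfun f M (a i)) +
        (∑ k, (op (f (φ.B k j)) : Sᵐᵒᵖ) • b k) = 0) :
    a ∈ φ.sol M := by
  classical
  choose y hy using fun k => Submodule.Quotient.mk_surjective (relK f M) (b k)
  have hE : ∀ j, ((∑ i, (op (f (φ.A i j)) : Sᵐᵒᵖ) • Finsupp.single (a i) (1 : S)) +
      ∑ k, (op (f (φ.B k j)) : Sᵐᵒᵖ) • y k) ∈ relK f M := by
    intro j
    rw [← Submodule.Quotient.mk_eq_zero, ← Submodule.mkQ_apply, map_add, map_sum, map_sum]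
    simp only [map_smul, Submodule.mkQ_apply, hy]
    exact h j
  choose c hc using fun j => Finsupp.mem_span_range_iff_exists_finsupp.mp (hE j)
  -- constituents of a generator
  let cons : (M × M) ⊕ (R × M) → Finset M := fun γ =>
    Sum.elim (fun p => {p.1 + p.2, p.1, p.2}) (fun p => {op p.1 • p.2, p.2}) γ
  let Supp : Finset M :=
    ((Finset.image a Finset.univ) ∪ Finset.univ.biUnion fun k => (y k).support)
      ∪ Finset.univ.biUnion fun j => (c j).support.biUnion cons
  have haS : ∀ i, a i ∈ Supp := fun i =>
    Finset.mem_union_left _ (Finset.mem_union_left _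
      (Finset.mem_image.mpr ⟨i, Finset.mem_univ i, rfl⟩))
  have hconsS : ∀ j γ, γ ∈ (c j).support → ∀ m ∈ cons γ, m ∈ Supp := by
    intro j γ hγ m hm
    exact Finset.mem_union_right _
      (Finset.mem_biUnion.mpr ⟨j, Finset.mem_univ j,
        Finset.mem_biUnion.mpr ⟨γ, hγ, hm⟩⟩)
  -- coefficient functions over R
  let ρ : ((M × M) ⊕ (R × M)) → M → R := fun γ m =>
    Sum.elim
      (fun p => (if p.1 + p.2 = m then (1:R) else 0) - (if p.1 = m then (1:R) else 0)
        - (if p.2 = m then (1:R) else 0))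
      (fun p => (if op p.1 • p.2 = m then (1:R) else 0) - (if p.2 = m then p.1 else 0)) γ
  have hρ : ∀ γ m, f (ρ γ m) = genElt f M γ m := by
    intro γ m
    rcases γ with p | p <;>
      simp [ρ, genElt, Finsupp.single_apply, apply_ite f, map_sub]
  have hite : ∀ (u : M) (r' : R), u ∈ Supp →
      ∑ m ∈ Supp.attach, op (if u = (m : M) then r' else 0) • (m : M) = op r' • u := by
    intro u r' hu
    have hsplit : ∀ m ∈ Supp, op (if u = m then r' else 0) • m
        = if u = m then op r' • m else 0 := by
      intro m _
      split_ifs with hh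
      · rfl
      · simp
    rw [Finset.sum_attach Supp (fun m => op (if u = m then r' else 0) • m),
      Finset.sum_congr rfl hsplit, Finset.sum_ite_eq Supp u (fun m => op r' • m), if_pos hu]
  have hρ0 : ∀ j γ, γ ∈ (c j).support →
      ∑ m ∈ Supp.attach, op (ρ γ (m : M)) • (m : M) = 0 := by
    intro j γ hγ
    have hc1 : ∀ m ∈ cons γ, m ∈ Supp := fun m hm => hconsS j γ hγ m hm
    rcases γ with p | p
    · have h1 : p.1 + p.2 ∈ Supp := hc1 _ (by simp [cons])
      have h2 : p.1 ∈ Supp := hc1 _ (by simp [cons])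
      have h3 : p.2 ∈ Supp := hc1 _ (by simp [cons])
      calc ∑ m ∈ Supp.attach, op (ρ (Sum.inl p) (m : M)) • (m : M)
          = (∑ m ∈ Supp.attach, op (if p.1 + p.2 = (m:M) then (1:R) else 0) • (m:M))
            - (∑ m ∈ Supp.attach, op (if p.1 = (m:M) then (1:R) else 0) • (m:M))
            - (∑ m ∈ Supp.attach, op (if p.2 = (m:M) then (1:R) else 0) • (m:M)) := by
            rw [← Finset.sum_sub_distrib, ← Finset.sum_sub_distrib]
            exact Finset.sum_congr rfl fun m _ => by simp [ρ, sub_smul]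
        _ = op (1:R) • (p.1 + p.2) - op (1:R) • p.1 - op (1:R) • p.2 := by
            rw [hite _ _ h1, hite _ _ h2, hite _ _ h3]
        _ = 0 := by rw [op_one, one_smul, one_smul, one_smul]; abel
    · have h1 : op p.1 • p.2 ∈ Supp := hc1 _ (by simp [cons])
      have h2 : p.2 ∈ Supp := hc1 _ (by simp [cons])
      calc ∑ m ∈ Supp.attach, op (ρ (Sum.inr p) (m : M)) • (m : M)
          = (∑ m ∈ Supp.attach, op (if op p.1 • p.2 = (m:M) then (1:R) else 0) • (m:M))
            - (∑ m ∈ Supp.attach, op (if p.2 = (m:M) then p.1 else 0) • (m:M)) := by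
            rw [← Finset.sum_sub_distrib]
            exact Finset.sum_congr rfl fun m _ => by simp [ρ, sub_smul]
        _ = op (1:R) • (op p.1 • p.2) - op p.1 • p.2 := by rw [hite _ _ h1, hite _ _ h2]
        _ = 0 := by rw [op_one, one_smul, sub_self]
  -- componentwise equations in S
  have hcomp : ∀ j (m : M),
      (∑ i, if a i = m then f (φ.A i j) else 0) + ∑ k, (y k) m * f (φ.B k j)
        = ∑ γ ∈ (c j).support, f (ρ γ m) * unop (c j γ) := by
    intro j m
    have h1 := congrArg (fun (x : M →₀ S) => x m) (hc j)
    simp only [Finsupp.sum, Finsupp.finset_sum_apply, Finsupp.add_apply, Finsupp.smul_apply,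
      MulOpposite.smul_eq_mul_unop, unop_op, Finsupp.single_apply, ite_mul, one_mul,
      zero_mul] at h1
    exact h1.symm.trans (Finset.sum_congr rfl fun γ _ => by rw [hρ])
  -- the linear system and its transfer to R
  let υ : Type u := (φ.κ × {m // m ∈ Supp}) ⊕ (Σ j : φ.ε, {γ // γ ∈ (c j).support})
  let J : Type u := φ.ε × {m // m ∈ Supp}
  let terms : J → List (R × υ × R) := fun q =>
    (Finset.univ.toList.map fun k : φ.κ => ((1:R), Sum.inl (k, q.2), φ.B k q.1))
      ++ ((c q.1).support.attach.toList.map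
        fun (γ : {γ // γ ∈ (c q.1).support}) =>
          (-(ρ (γ : (M × M) ⊕ (R × M)) (q.2 : M)), Sum.inr ⟨q.1, γ⟩, (1:R)))
  let w : J → R := fun q => ∑ i, if a i = (q.2 : M) then φ.A i q.1 else 0
  have hS : ∃ x : υ → S, ∀ q : J,
      ((terms q).map fun p => f p.1 * x p.2.1 * f p.2.2).sum + f (w q) = 0 := by
    refine ⟨Sum.elim (fun km => (y km.1) (km.2 : M))
      (fun jγ => unop (c jγ.1 (jγ.2 : (M × M) ⊕ (R × M)))), ?_⟩
    rintro ⟨j, m⟩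
    have h1 := hcomp j (m : M)
    simp only [terms, w, List.map_append, List.sum_append, List.map_map, Function.comp_def,
      Sum.elim_inl, Sum.elim_inr, map_one, map_neg, one_mul, mul_one, neg_mul, map_sum,
      apply_ite f, map_zero, Finset.sum_map_toList, Finset.sum_neg_distrib]
    rw [Finset.sum_attach ((c j).support) (fun γ => f (ρ γ (m:M)) * unop (c j γ)), ← h1]
    abel
  obtain ⟨t, ht⟩ := elem_transfer f hf υ J terms w hS
  refine ⟨fun k => ∑ m ∈ Supp.attach, op (t (Sum.inl (k, m))) • (m : M), fun j => ?_⟩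
  have e1 : ∑ m ∈ Supp.attach, op (w (j, m)) • (m : M) = ∑ i, op (φ.A i j) • a i := by
    have hw : ∀ m : {x // x ∈ Supp}, op (w (j, m)) • (m : M)
        = ∑ i, op (if a i = (m:M) then φ.A i j else 0) • (m : M) := by
      intro m
      rw [show w (j, m) = ∑ i, if a i = (m:M) then φ.A i j else 0 from rfl, Finset.op_sum,
        Finset.sum_smul]
    rw [Finset.sum_congr rfl fun m _ => hw m, Finset.sum_comm]
    exact Finset.sum_congr rfl fun i _ => hite (a i) (φ.A i j) (haS i)
  rw [← e1]
  have e2 : ∑ k, op (φ.B k j) • ∑ m ∈ Supp.attach, op (t (Sum.inl (k, m))) • (m:M)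
      = ∑ m ∈ Supp.attach, op (∑ k, t (Sum.inl (k, m)) * φ.B k j) • (m:M) := by
    have h2 : ∀ k : φ.κ, op (φ.B k j) • ∑ m ∈ Supp.attach, op (t (Sum.inl (k, m))) • (m:M)
        = ∑ m ∈ Supp.attach, op (t (Sum.inl (k, m)) * φ.B k j) • (m:M) := by
      intro k
      rw [Finset.smul_sum]
      exact Finset.sum_congr rfl fun m _ => by rw [← mul_smul, ← op_mul]
    rw [Finset.sum_congr rfl fun k _ => h2 k, Finset.sum_comm]
    exact Finset.sum_congr rfl fun m _ => by rw [Finset.op_sum, Finset.sum_smul]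
  rw [e2, ← Finset.sum_add_distrib]
  have e3 : ∀ m : {x // x ∈ Supp},
      op (w (j, m)) • (m:M) + op (∑ k, t (Sum.inl (k, m)) * φ.B k j) • (m:M)
      = ∑ γ ∈ (c j).support.attach,
          op (t (Sum.inr ⟨j, γ⟩)) • (op (ρ (γ : (M × M) ⊕ (R × M)) (m:M)) • (m:M)) := by
    intro m
    have h1 := ht (j, m)
    simp only [terms, List.map_append, List.sum_append, List.map_map, Function.comp_def,
      one_mul, mul_one, neg_mul, Finset.sum_map_toList, Finset.sum_neg_distrib] at h1
    have h2 : w (j, m) + ∑ k, t (Sum.inl (k, m)) * φ.B k j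
        = ∑ γ ∈ (c j).support.attach,
            ρ (γ : (M × M) ⊕ (R × M)) (m:M) * t (Sum.inr ⟨j, γ⟩) := by
      rw [← sub_eq_zero]
      calc w (j, m) + (∑ k, t (Sum.inl (k, m)) * φ.B k j)
            - ∑ γ ∈ (c j).support.attach,
                ρ (γ : (M × M) ⊕ (R × M)) (m:M) * t (Sum.inr ⟨j, γ⟩)
          = (∑ k, t (Sum.inl (k, m)) * φ.B k j)
            + -(∑ γ ∈ (c j).support.attach,
                ρ (γ : (M × M) ⊕ (R × M)) (m:M) * t (Sum.inr ⟨j, γ⟩)) + w (j, m) := by abel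
        _ = 0 := h1
    rw [show op (w (j, m)) • (m:M) + op (∑ k, t (Sum.inl (k, m)) * φ.B k j) • (m:M)
        = op (w (j, m) + ∑ k, t (Sum.inl (k, m)) * φ.B k j) • (m:M) by
          rw [op_add, add_smul], h2, Finset.op_sum, Finset.sum_smul]
    exact Finset.sum_congr rfl fun γ _ => by rw [op_mul, mul_smul]
  rw [Finset.sum_congr rfl fun m _ => e3 m, Finset.sum_comm]
  refine Finset.sum_eq_zero fun γ _ => ?_
  rw [← Finset.smul_sum, hρ0 j (γ : (M × M) ⊕ (R × M)) γ.2, smul_zero]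

private noncomputable def gmapL :
    M →ₗ[Rᵐᵒᵖ] (resMod R S f (ModuleCat.of Sᵐᵒᵖ (QMod f M))) where
  toFun m := gfun f M m
  map_add' := gfun_add f M
  map_smul' r m := by
    show gfun f M (r • m) = (op (f (unop r)) : Sᵐᵒᵖ) • gfun f M m
    conv_lhs => rw [← op_unop r]
    exact gfun_smul f M (unop r) m

private lemma gmapL_pure (hf : IsElemRingEmb R S f) : IsPureEmb R (gmapL f M) := by
  have hrefl : ∀ (ι : Type) (_ : Fintype ι) (φ : PP R ι) (a : ι → M),
      (fun i => gmapL f M (a i)) ∈ φ.sol (resMod R S f (ModuleCat.of Sᵐᵒᵖ (QMod f M)))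
        → a ∈ φ.sol M := by
    intro ι _ φ a ha
    obtain ⟨b, hb⟩ := ha
    exact key_reflect f M hf ι φ a b hb
  constructor
  · intro m m' hmm'
    let φ0 : PP R Unit :=
      { κ := Empty, ε := Unit, A := fun _ _ => (1:R), B := fun e _ => e.elim }
    have h0 : (fun _ : Unit => gmapL f M (m - m'))
        ∈ φ0.sol (resMod R S f (ModuleCat.of Sᵐᵒᵖ (QMod f M))) := by
      refine ⟨fun e => e.elim, fun _ => ?_⟩
      have hz : gmapL f M (m - m') = 0 := by rw [map_sub, hmm', sub_self]
      simp [φ0, hz]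
    obtain ⟨b, hb⟩ := hrefl Unit inferInstance φ0 (fun _ => m - m') h0
    have h2 := hb ()
    simp only [φ0, Finset.univ_unique, Finset.sum_singleton, Finset.univ_eq_empty,
      Finset.sum_empty, add_zero, op_one, one_smul] at h2
    exact sub_eq_zero.mp h2
  · intro ι inst φ a ha
    obtain ⟨b, hb⟩ := ha
    exact key_reflect f M hf ι φ a b hb

private lemma sol_map {M N : Type u} [AddCommGroup M] [Module Rᵐᵒᵖ M]
    [AddCommGroup N] [Module Rᵐᵒᵖ N] (h : M →ₗ[Rᵐᵒᵖ] N) {ι : Type} [Fintype ι] {φ : PP R ι}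
    {a : ι → M} (ha : a ∈ φ.sol M) : (fun i => h (a i)) ∈ φ.sol N := by
  obtain ⟨b, hb⟩ := ha
  refine ⟨fun k => h (b k), fun j => ?_⟩
  have h2 := congrArg h (hb j)
  simpa only [map_add, map_sum, map_smul, map_zero] using h2

end Statement18Aux


/-- If `f : R → S` is an elementary extension of rings, then the
definable trace `DefTr^S_R` is all of `Mod-R`; that is, every right `R`-module
purely embeds in the restriction along `f` of some right `S`-module. -/
theorem statement18 (R S : Type u) [Ring R] [Ring S] (f : R →+* S)
    (hf : IsElemRingEmb R S f) :
    DefTr R S f = Set.univ ∧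
      ∀ M : ModuleCat.{u} Rᵐᵒᵖ, ∃ (M' : ModuleCat.{u} Sᵐᵒᵖ)
        (g : M →ₗ[Rᵐᵒᵖ] (resMod R S f M')), IsPureEmb R g := by
  have part2 : ∀ M : ModuleCat.{u} Rᵐᵒᵖ, ∃ (M' : ModuleCat.{u} Sᵐᵒᵖ)
      (g : M →ₗ[Rᵐᵒᵖ] (resMod R S f M')), IsPureEmb R g :=
    fun M => ⟨ModuleCat.of Sᵐᵒᵖ (QMod f M), gmapL f M, gmapL_pure f M hf⟩
  refine ⟨?_, part2⟩
  rw [Set.eq_univ_iff_forall]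
  intro M p hp
  obtain ⟨M', g, hg⟩ := part2 M
  have hclosed : (p.num.map f).sol M' = (p.den.map f).sol M' := hp M' (Set.mem_univ M')
  apply Set.Subset.antisymm
  · intro x hx
    have h1 : (fun i => g (x i)) ∈ p.num.sol (resMod R S f M') := sol_map g hx
    have h2 : (fun i => g (x i)) ∈ (p.num.map f).sol M' := h1
    rw [hclosed] at h2
    have h3 : (fun i => g (x i)) ∈ p.den.sol (resMod R S f M') := h2
    exact hg.2 (Fin p.n) inferInstance p.den x h3
  · exact p.le M

end MTM
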